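/- Histogram rendering correctness (deterministic core): Let p : {1,…,B} → [0,1] be bucket probabilities with maximum p_max > 0, and let p̂ : {1,…,B} → [0,1] be estimates with |p̂(b) − p(b)| ≤ μ·p_max/(2V) for all b, where 0 < μ < 1/2. Define p̂_max = max_b p̂(b) and assign each bucket b the pixel height j(b) ∈ ℤ minimizing |p̂(b) − j·p̂_max/V|. Then for every b, p(b) ∈ [(j(b) − 1/2 − μ)·p_max/V, (j(b) + 1/2 + μ)·p_max/V]. -/

import Mathlib

/-!
Rounding `p̂ b` to the estimated grid of step `p̂_max / V` errs by at most half a step. The chosen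
height lies in `[0, V]` because `0 ≤ p̂ b ≤ p̂_max`, so with `|p̂_max - p_max| ≤ μ p_max / (2V)`,
moving the pixel edge `(j ± 1/2) · p̂_max / V` to `(j ± 1/2) · p_max / V` costs at most another
`μ p_max / (2V)`, as does replacing `p̂ b` by `p b`: together a widening by `μ` pixels. The one
exception is the top edge of the tallest bar `j = V`, which is handled by `p b ≤ p_max`.
-/

namespace Finset

variable {ι α : Type*} [AddCommGroup α] [LinearOrder α] [IsOrderedAddMonoid α]
  {s : Finset ι} {f g : ι → α} {e : α}

theorem sup'_le_sup'_add (hs : s.Nonempty) (h : ∀ i ∈ s, f i ≤ g i + e) :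
    s.sup' hs f ≤ s.sup' hs g + e :=
  sup'_le hs f fun i hi => (h i hi).trans (by gcongr; exact le_sup' g hi)

theorem abs_sup'_sub_sup'_le (hs : s.Nonempty) (h : ∀ i ∈ s, |f i - g i| ≤ e) :
    |s.sup' hs f - s.sup' hs g| ≤ e := by
  rw [abs_sub_le_iff, sub_le_iff_le_add', sub_le_iff_le_add']
  refine ⟨sup'_le_sup'_add hs fun i hi => ?_, sup'_le_sup'_add hs fun i hi => ?_⟩
  · exact sub_le_iff_le_add'.mp (abs_sub_le_iff.mp (h i hi)).1
  · exact sub_le_iff_le_add'.mp (abs_sub_le_iff.mp (h i hi)).2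

end Finset

theorem abs_sub_mul_le_half_of_forall_le {x w : ℝ} {j : ℤ} (hw : 0 < w)
    (hj : ∀ k : ℤ, |x - j * w| ≤ |x - k * w|) : |x - j * w| ≤ w / 2 :=
  calc |x - j * w|
      ≤ |x - round (x / w) * w| := hj _
    _ = |x / w - round (x / w)| * w := by
        rw [← abs_of_pos hw, ← abs_mul, abs_of_pos hw, sub_mul, div_mul_cancel₀ x hw.ne']
    _ ≤ 1 / 2 * w := by gcongr; exact abs_sub_round _
    _ = w / 2 := by ring

section RoundingBounds

variable {x w : ℝ} {j : ℤ}

theorem Int.nonneg_of_abs_sub_mul_le_half (hw : 0 < w) (hx : 0 ≤ x)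
    (hj : |x - j * w| ≤ w / 2) : 0 ≤ j := by
  have : (-1 : ℝ) < j := by
    by_contra! h
    nlinarith [(abs_le.mp hj).2]
  have : (-1 : ℤ) < j := by exact_mod_cast this
  omega

theorem Int.le_of_abs_sub_mul_le_half {n : ℤ} (hw : 0 < w) (hx : x ≤ n * w)
    (hj : |x - j * w| ≤ w / 2) : j ≤ n := by
  have : (j : ℝ) < n + 1 := by
    by_contra! h
    nlinarith [(abs_le.mp hj).1]
  have : j < n + 1 := by exact_mod_cast this
  omega

end RoundingBounds

theorem abs_mul_div_sub_mul_div_le {c V M M' e : ℝ} (hV : 0 < V) (hc : |c| ≤ V)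
    (hM : |M' - M| ≤ e) : |c * M' / V - c * M / V| ≤ e := by
  rw [← sub_div, ← mul_sub, abs_div, abs_of_pos hV, div_le_iff₀ hV, abs_mul, mul_comm e]
  exact mul_le_mul hc hM (abs_nonneg _) hV.le

section PixelEdges

variable {V M M' x x' μ j : ℝ}

theorem sub_half_sub_mul_div_le (hV : 0 < V) (hj : |j - 1 / 2| ≤ V)
    (hM : |M' - M| ≤ μ * M / (2 * V)) (hx : |x' - x| ≤ μ * M / (2 * V))
    (hround : -(M' / V / 2) ≤ x' - j * (M' / V)) :
    (j - 1 / 2 - μ) * M / V ≤ x := by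
  have hshift := (abs_le.mp (abs_mul_div_sub_mul_div_le hV hj hM)).1
  have : (j - 1 / 2 - μ) * M / V = (j - 1 / 2) * M / V - 2 * (μ * M / (2 * V)) := by
    field_simp
  have : (j - 1 / 2) * M' / V = j * (M' / V) - M' / V / 2 := by ring
  linarith [(abs_le.mp hx).2]

theorem le_add_half_add_mul_div (hV : 0 < V) (hj : |j + 1 / 2| ≤ V)
    (hM : |M' - M| ≤ μ * M / (2 * V)) (hx : |x' - x| ≤ μ * M / (2 * V))
    (hround : x' - j * (M' / V) ≤ M' / V / 2) :
    x ≤ (j + 1 / 2 + μ) * M / V := by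
  have := sub_half_sub_mul_div_le (j := -j) (x := -x) (x' := -x') hV
    (by rwa [← abs_neg, neg_sub_left, neg_neg, add_comm]) hM
    (by rwa [neg_sub_neg, abs_sub_comm]) (by linarith)
  linarith [show (-j - 1 / 2 - μ) * M / V = -((j + 1 / 2 + μ) * M / V) by ring]

end PixelEdges

theorem histogram_rendering_deterministic_general
    (B V : ℕ) (hB : 0 < B) (hV : 0 < V)
    (μ : ℝ) (hμ0 : 0 < μ) (hμhalf : μ < 1 / 2)
    (p phat : Fin B → ℝ)
    (hphat : ∀ b, phat b ∈ Set.Icc (0 : ℝ) 1)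
    (pmax : ℝ) (hpmax : pmax = Finset.univ.sup' ⟨⟨0, hB⟩, Finset.mem_univ _⟩ p)
    (hpmax_pos : 0 < pmax)
    (phatmax : ℝ) (hphatmax : phatmax = Finset.univ.sup' ⟨⟨0, hB⟩, Finset.mem_univ _⟩ phat)
    (herr : ∀ b, |phat b - p b| ≤ μ * pmax / (2 * V))
    (j : Fin B → ℤ)
    (hj : ∀ b, ∀ k : ℤ, |phat b - (j b : ℝ) * phatmax / V| ≤ |phat b - (k : ℝ) * phatmax / V|) :
    ∀ b, ((j b : ℝ) - 1 / 2 - μ) * pmax / V ≤ p b ∧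
      p b ≤ ((j b : ℝ) + 1 / 2 + μ) * pmax / V := by
  intro b
  have hVr : (1 : ℝ) ≤ V := by exact_mod_cast hV
  have hgap : |phatmax - pmax| ≤ μ * pmax / (2 * V) := by
    rw [hphatmax]; nth_rw 1 [hpmax]; exact Finset.abs_sup'_sub_sup'_le _ fun b _ => herr b
  have hw : 0 < phatmax / V := by
    have : μ * pmax / (2 * V) < pmax := by rw [div_lt_iff₀ (by positivity)]; nlinarith
    exact div_pos (by linarith [(abs_le.mp hgap).1]) (by positivity)
  simp only [mul_div_assoc] at hj
  have hround := abs_sub_mul_le_half_of_forall_le hw (hj b)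
  have hj0 : (0 : ℝ) ≤ j b := by
    exact_mod_cast Int.nonneg_of_abs_sub_mul_le_half hw (hphat b).1 hround
  have hjV : j b ≤ (V : ℤ) := Int.le_of_abs_sub_mul_le_half hw (by
    rw [Int.cast_natCast, mul_div_cancel₀ _ (by positivity)]
    exact hphatmax ▸ Finset.le_sup' phat (Finset.mem_univ b)) hround
  have hV0 : (0 : ℝ) < V := by positivity
  have hjV' : (j b : ℝ) ≤ V := by exact_mod_cast hjV
  constructor
  · exact sub_half_sub_mul_div_le hV0 (abs_le.mpr ⟨by linarith, by linarith⟩) hgap (herr b)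
      (abs_le.mp hround).1
  rcases hjV.eq_or_lt with htop | hlow
  · have hpb : p b ≤ pmax := hpmax ▸ Finset.le_sup' p (Finset.mem_univ b)
    rw [htop, Int.cast_natCast, le_div_iff₀ hV0]
    nlinarith
  · have : (j b : ℝ) + 1 ≤ V := by exact_mod_cast hlow
    exact le_add_half_add_mul_div hV0 (abs_le.mpr ⟨by linarith, by linarith⟩) hgap (herr b)
      (abs_le.mp hround).2

/-- Deterministic core of histogram rendering correctness (Hillview, Theorem 3).
If each estimated bucket probability is within `μ·p_max/(2V)` of the truth and each
bucket is assigned the pixel height `j b` minimizing `|p̂ b - j·p̂_max/V|`, then every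
true bucket probability lies in the widened pixel interval
`[(j b - 1/2 - μ)·p_max/V, (j b + 1/2 + μ)·p_max/V]`. -/
theorem histogram_rendering_deterministic
    (B V : ℕ) (hB : 0 < B) (hV : 0 < V)
    (μ : ℝ) (hμ0 : 0 < μ) (hμhalf : μ < 1 / 2)
    (p phat : Fin B → ℝ)
    (hp : ∀ b, p b ∈ Set.Icc (0 : ℝ) 1) (hphat : ∀ b, phat b ∈ Set.Icc (0 : ℝ) 1)
    (pmax : ℝ) (hpmax : pmax = Finset.univ.sup' ⟨⟨0, hB⟩, Finset.mem_univ _⟩ p)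
    (hpmax_pos : 0 < pmax)
    (phatmax : ℝ) (hphatmax : phatmax = Finset.univ.sup' ⟨⟨0, hB⟩, Finset.mem_univ _⟩ phat)
    (herr : ∀ b, |phat b - p b| ≤ μ * pmax / (2 * V))
    (j : Fin B → ℤ)
    (hj : ∀ b, ∀ k : ℤ, |phat b - (j b : ℝ) * phatmax / V| ≤ |phat b - (k : ℝ) * phatmax / V|) :
    ∀ b, ((j b : ℝ) - 1 / 2 - μ) * pmax / V ≤ p b ∧
      p b ≤ ((j b : ℝ) + 1 / 2 + μ) * pmax / V :=
  histogram_rendering_deterministic_general B V hB hV μ hμ0 hμhalf p phat hphat pmax hpmax hpmax_pos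
    phatmax hphatmax herr j hj
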